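/- For α, β > 0 and all u ∈ [0, β²/(4α)), the Taylor approximation underestimates the true discharge: q̃(u) = (α/β³)·u² + (1/β)·u ≤ q(u) = (β - √(β² - 4αu))/(2α). -/
import Mathlib


theorem stmt_6 (α β : ℝ) (hα : 0 < α) (hβ : 0 < β) :
    ∀ u ∈ Set.Ico (0 : ℝ) (β ^ 2 / (4 * α)),
      (α / β ^ 3) * u ^ 2 + (1 / β) * u ≤
        (β - Real.sqrt (β ^ 2 - 4 * α * u)) / (2 * α) := by
  rintro u ⟨hu0, hu1⟩
  have h4 : 4 * α * u < β ^ 2 := by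
    rw [lt_div_iff₀ (by positivity)] at hu1
    nlinarith
  set t : ℝ := β - 2 * α ^ 2 * u ^ 2 / β ^ 3 - 2 * α * u / β with ht
  clear_value t
  have hb3 : (0:ℝ) < β ^ 3 := by positivity
  have key : 0 ≤ β ^ 4 - 2 * α ^ 2 * u ^ 2 - 2 * α * u * β ^ 2 := by
    nlinarith [mul_lt_mul_of_pos_right h4 (pow_pos hβ 2),
      mul_nonneg (mul_nonneg (by norm_num : (0:ℝ) ≤ 4) hα.le) hu0,
      mul_le_mul_of_nonneg_left h4.le (mul_nonneg (mul_nonneg (by norm_num : (0:ℝ) ≤ 4) hα.le) hu0)]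
  have htnn : 0 ≤ t := by
    have heq : t = (β ^ 4 - 2 * α ^ 2 * u ^ 2 - 2 * α * u * β ^ 2) / β ^ 3 := by
      rw [ht]; field_simp
    rw [heq]
    exact div_nonneg key hb3.le
  have hsq : β ^ 2 - 4 * α * u ≤ t ^ 2 := by
    have heq : t ^ 2 = (β ^ 2 - 4 * α * u) +
        (8 * α ^ 3 * u ^ 3 * β ^ 2 + 4 * α ^ 4 * u ^ 4) / β ^ 6 := by
      rw [ht]; field_simp; ring
    rw [heq]
    have : 0 ≤ (8 * α ^ 3 * u ^ 3 * β ^ 2 + 4 * α ^ 4 * u ^ 4) / β ^ 6 := by positivity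
    linarith
  have hs : Real.sqrt (β ^ 2 - 4 * α * u) ≤ t := by
    calc Real.sqrt (β ^ 2 - 4 * α * u) ≤ Real.sqrt (t ^ 2) := Real.sqrt_le_sqrt hsq
      _ = t := Real.sqrt_sq htnn
  rw [le_div_iff₀ (by positivity)]
  have heq2 : ((α / β ^ 3) * u ^ 2 + (1 / β) * u) * (2 * α) = β - t := by
    rw [ht]; field_simp; ring
  linarith [heq2, hs]
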